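/- Let p, q ≥ 2 be coprime integers and let k ≥ 1 be an integer, and set r := pqk − 1 (so that p, q, r are pairwise coprime and r ≥ 2). Then R(p, q, r) = 1, i.e., 2/(pqr) + Σ over the three entries m ∈ {p, q, r} of (2/m)·Σ_{j=1}^{m−1} cot(πj(pqr)/m²)·cot(πj/m)·sin²(πj/m) equals 1. -/

import Mathlib

open Real

noncomputable section

/-- The summand of the Fintushel–Stern invariant attached to the multiplicity `m`:
`(2/m)·Σ_{j=1}^{m-1} cot(πjA/m²)·cot(πj/m)·sin²(πj/m)`, where `A` is the (real) product of
the multiplicities. -/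
def fsTerm (A : ℝ) (m : ℕ) : ℝ :=
  (2 / (m : ℝ)) * ∑ j ∈ Finset.Icc 1 (m - 1),
    Real.cot (π * j * A / (m : ℝ) ^ 2) * Real.cot (π * j / (m : ℝ)) *
      Real.sin (π * j / (m : ℝ)) ^ 2

/-!
For `m ≥ 2` and `c` invertible mod `m` with inverse `d ∈ (0, m)`, the identity
`cot x · sin² x = sin 2x / 2` and the substitution `j ↦ jc mod m` turn the `m`-term of
`R(A)`, `A = mc`, into `(1/m) Σ_j cot(πj/m) sin(2πjd/m)`. Writing `cot θ · sin 2dθ` as a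
telescoping sum of cosines and using that `Σ_j cos(2πjt/m)` vanishes unless `m ∣ t`, this is
`1 - 2d/m`.

For `r = pqk - 1` the inverse of `pq` mod `r` is `k`, while `r ≡ -1` mod `p` and mod `q` makes
the inverses `a` of `qr` mod `p` and `b` of `pr` mod `q` satisfy `qa ≡ -1 (mod p)`,
`pb ≡ -1 (mod q)`; so `qa + pb + 1` is a multiple of `pq` below `2pq`, i.e. equals `pq`. Then
`a/p + b/q + k/r = 1 + 1/(pqr)`, which is exactly `R(p, q, r) = 1`.
-/

open Finset Function

theorem Real.cot_periodic : Periodic cot π := fun x => by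
  simp only [cot_eq_cos_div_sin, sin_add_pi, cos_add_pi, neg_div_neg_eq]

theorem Real.cot_mul_sin_sq (x : ℝ) : cot x * sin x ^ 2 = sin (2 * x) / 2 := by
  rw [cot_eq_cos_div_sin, sin_two_mul]
  by_cases hx : sin x = 0
  · simp [hx]
  · field_simp

theorem Real.cot_mul_sin_two_nat_mul {θ : ℝ} (hθ : sin θ ≠ 0) (n : ℕ) :
    cot θ * sin (2 * n * θ) = ∑ t ∈ range n, (cos (2 * t * θ) + cos (2 * (t + 1) * θ)) := by
  induction n with
  | zero => simp
  | succ n ih =>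
    rw [sum_range_succ, ← ih, cot_eq_cos_div_sin]
    push_cast
    rw [show 2 * ((n : ℝ) + 1) * θ = 2 * n * θ + 2 * θ by ring, sin_add, cos_add,
      sin_two_mul, cos_two_mul]
    field_simp
    linear_combination (2 * cos θ * sin (2 * n * θ)) * sin_sq_add_cos_sq θ

theorem Function.Periodic.comp_natCast_mul_div {α : Type*} {F : ℝ → α} {T : ℝ}
    (hF : Periodic F T) {m : ℕ} (hm : m ≠ 0) : Periodic (fun k : ℕ => F (T * k / m)) m := by
  intro k
  have hm' : (m : ℝ) ≠ 0 := Nat.cast_ne_zero.mpr hm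
  simp only
  rw [show T * ((k + m : ℕ) : ℝ) / m = T * k / m + T by push_cast; field_simp]
  exact hF _

theorem Nat.mul_mod_mul_modEq_self {m c d : ℕ} (hcd : c * d ≡ 1 [MOD m]) (j : ℕ) :
    j * c % m * d ≡ j [MOD m] :=
  calc j * c % m * d ≡ j * c * d [MOD m] := (Nat.mod_modEq _ m).mul_right d
    _ = j * (c * d) := mul_assoc _ _ _
    _ ≡ j * 1 [MOD m] := hcd.mul_left j
    _ = j := mul_one j

theorem Finset.sum_range_comp_mul_mod {M : Type*} [AddCommMonoid M] {m c d : ℕ}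
    (hcd : c * d ≡ 1 [MOD m]) (f : ℕ → M) :
    ∑ j ∈ range m, f (j * c % m) = ∑ j ∈ range m, f j := by
  have inv {a b : ℕ} (hab : a * b ≡ 1 [MOD m]) {j : ℕ} (hj : j ∈ range m) :
      j * a % m * b % m = j := by
    rw [Nat.mul_mod_mul_modEq_self hab j, Nat.mod_eq_of_lt (mem_range.mp hj)]
  refine sum_nbij' (fun j => j * c % m) (fun j => j * d % m) ?_ ?_ (fun j hj => inv hcd hj)
    (fun j hj => inv (mul_comm c d ▸ hcd) hj) (fun _ _ => rfl)
  all_goals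
    intro j hj
    exact mem_range.mpr (Nat.mod_lt _ (Nat.pos_of_ne_zero (by rintro rfl; simp at hj)))

theorem sum_range_cos_two_pi_mul_div_eq_zero {m t : ℕ} (ht : ¬ m ∣ t) :
    ∑ j ∈ range m, cos (2 * π * (t * j) / m) = 0 := by
  rcases eq_or_ne m 0 with rfl | hm
  · simp
  have hω := Complex.isPrimitiveRoot_exp m hm
  set ζ := Complex.exp (2 * π * Complex.I / m) ^ t
  have hζ : ζ ≠ 1 := by rwa [Ne, hω.pow_eq_one_iff_dvd]
  have hζm : ζ ^ m = 1 := by rw [← pow_mul, mul_comm t m, pow_mul, hω.pow_eq_one, one_pow]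
  have hgeom : ∑ j ∈ range m, ζ ^ j = 0 := by rw [geom_sum_eq hζ, hζm, sub_self, zero_div]
  rw [← Complex.zero_re, ← hgeom, Complex.re_sum]
  refine sum_congr rfl fun j _ => ?_
  rw [← pow_mul, ← Complex.exp_nat_mul, ← Complex.exp_ofReal_mul_I_re]
  congr 2
  push_cast
  ring

theorem sum_range_cot_mul_sin {m n : ℕ} (hn : 0 < n) (hnm : n < m) :
    ∑ j ∈ range m, cot (π * j / m) * sin (2 * π * (j * n) / m) = m - 2 * n := by
  have hm0 : 0 < m := hn.trans hnm
  set C : ℕ → ℕ → ℝ := fun t j => cos (2 * π * (t * j) / m)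
  have hC (t : ℕ) (ht : 0 < t) (htm : t < m) : ∑ j ∈ (range m).erase 0, C t j = -1 := by
    rw [sum_erase_eq_sub (mem_range.mpr hm0),
      sum_range_cos_two_pi_mul_div_eq_zero (fun h => by have := Nat.le_of_dvd ht h; omega)]
    simp [C]
  have telescope : ∀ j ∈ (range m).erase 0, cot (π * j / m) * sin (2 * π * (j * n) / m) =
      ∑ t ∈ range n, (C t j + C (t + 1) j) := by
    intro j hj
    obtain ⟨hj0, hjm⟩ : j ≠ 0 ∧ j < m := by simpa using hj
    have hsin : sin (π * j / m) ≠ 0 := by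
      have : (0 : ℝ) < j := by exact_mod_cast Nat.pos_of_ne_zero hj0
      refine (sin_pos_of_pos_of_lt_pi (by positivity) ?_).ne'
      rw [div_lt_iff₀ (by positivity)]
      exact mul_lt_mul_of_pos_left (by exact_mod_cast hjm) pi_pos
    rw [show 2 * π * (j * n) / m = 2 * n * (π * j / m) by ring, cot_mul_sin_two_nat_mul hsin]
    refine sum_congr rfl fun t _ => ?_
    simp only [C]
    push_cast
    congr 2 <;> ring
  rw [← sum_erase (range m) (a := 0) (by simp), sum_congr rfl telescope, sum_comm]
  have hsum : ∀ t ∈ range n, ∑ j ∈ (range m).erase 0, (C t j + C (t + 1) j) =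
      (if t = 0 then (m : ℝ) else 0) - 2 := by
    intro t ht
    rw [mem_range] at ht
    rw [sum_add_distrib, hC (t + 1) t.succ_pos (by omega)]
    rcases eq_or_ne t 0 with rfl | ht0
    · simp only [C, CharP.cast_eq_zero, zero_mul, mul_zero, zero_div, cos_zero, sum_const,
        card_erase_of_mem (mem_range.mpr hm0), card_range, nsmul_eq_mul, mul_one,
        Nat.cast_pred hm0, ↓reduceIte]
      ring
    · rw [hC t (Nat.pos_of_ne_zero ht0) (by omega), if_neg ht0]
      ring
  rw [sum_congr rfl hsum, sum_sub_distrib, sum_ite_eq' _ 0, if_pos (by simpa using hn)]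
  simp [mul_comm]

theorem fsTerm_natCast_mul {m c d : ℕ} (hm : 2 ≤ m) (hcd : c * d ≡ 1 [MOD m]) (hdm : d < m) :
    fsTerm ((m * c : ℕ) : ℝ) m = 1 - 2 * d / m := by
  have hm0 : (m : ℝ) ≠ 0 := by positivity
  have hd0 : 0 < d := by
    refine Nat.pos_of_ne_zero fun hd => ?_
    rw [hd, mul_zero] at hcd
    exact absurd (Nat.le_of_dvd one_pos ((Nat.modEq_zero_iff_dvd).mp hcd.symm)) (by omega)
  set cotP : ℕ → ℝ := fun k => cot (π * k / m)
  set sinP : ℕ → ℝ := fun k => sin (2 * π * k / m)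
  have hcot : Periodic cotP m := cot_periodic.comp_natCast_mul_div (by omega)
  have hsin : Periodic sinP m := sin_periodic.comp_natCast_mul_div (by omega)
  have summand (j : ℕ) : cot (π * j * ((m * c : ℕ) : ℝ) / m ^ 2) * cot (π * j / m) *
      sin (π * j / m) ^ 2 = cotP (j * c) * sinP j / 2 := by
    rw [mul_assoc, cot_mul_sin_sq]
    simp only [cotP, sinP]
    push_cast
    field_simp
  have reindex :
      ∑ j ∈ range m, cotP (j * c) * sinP j = ∑ j ∈ range m, cotP j * sinP (j * d) := by
    rw [← sum_range_comp_mul_mod hcd fun k => cotP k * sinP (k * d)]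
    refine sum_congr rfl fun j _ => ?_
    rw [hcot.map_mod_nat, ← hsin.map_mod_nat (j * c % m * d), Nat.mul_mod_mul_modEq_self hcd j,
      hsin.map_mod_nat]
  have hzero : ∀ j ∈ range m, j ∉ Icc 1 (m - 1) → cot (π * j * ((m * c : ℕ) : ℝ) / m ^ 2) *
      cot (π * j / m) * sin (π * j / m) ^ 2 = 0 := by
    intro j hj hj'
    obtain rfl : j = 0 := by simp only [mem_range, mem_Icc] at hj hj'; omega
    simp
  rw [fsTerm, sum_subset (fun j hj => by simp only [mem_range, mem_Icc] at hj ⊢; omega) hzero,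
    sum_congr rfl fun j _ => summand j, ← sum_div, reindex]
  simp only [cotP, sinP, Nat.cast_mul]
  rw [sum_range_cot_mul_sin hd0 hdm]
  field_simp

theorem Nat.mul_modEq_one_of_dvd_add_one {p a b : ℕ} (ha : p ∣ a + 1) (hb : p ∣ b + 1) :
    a * b ≡ 1 [MOD p] := by
  rw [Nat.modEq_iff_dvd]
  have ha' : (p : ℤ) ∣ a + 1 := by exact_mod_cast ha
  have hb' : (p : ℤ) ∣ b + 1 := by exact_mod_cast hb
  have key : ((1 : ℕ) : ℤ) - (a * b : ℕ) = (a + 1) + (b + 1) - (a + 1) * (b + 1) := by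
    push_cast; ring
  rw [key]
  exact (ha'.add hb').sub (dvd_mul_of_dvd_left ha' _)

theorem Nat.exists_lt_dvd_mul_add_one {p q : ℕ} (hp : p ≠ 0) (hpq : p.Coprime q) :
    ∃ d < p, p ∣ q * d + 1 := by
  have : NeZero p := ⟨hp⟩
  refine ⟨(-(q : ZMod p)⁻¹).val, ZMod.val_lt _, (ZMod.natCast_eq_zero_iff _ _).mp ?_⟩
  push_cast
  rw [ZMod.natCast_zmod_val, mul_neg, ZMod.coe_mul_inv_eq_one q hpq.symm, neg_add_cancel]

theorem Nat.mul_add_mul_add_one_eq_mul {p q a b : ℕ} (hpq : p.Coprime q) (ha : a < p)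
    (hb : b < q) (hpa : p ∣ q * a + 1) (hqb : q ∣ p * b + 1) : q * a + p * b + 1 = p * q := by
  have hp : p ∣ q * a + p * b + 1 := by
    rw [add_right_comm]; exact hpa.add (dvd_mul_right p b)
  have hq : q ∣ q * a + p * b + 1 := by
    rw [add_assoc]; exact (dvd_mul_right q a).add hqb
  refine Nat.eq_of_dvd_of_lt_two_mul (by omega) (hpq.mul_dvd_of_dvd_of_dvd hp hq) ?_
  nlinarith

/-- For coprime integers `p, q ≥ 2` and `k ≥ 1`, setting `r := pqk - 1` (so that `p`, `q`, `r`
are pairwise coprime and `r ≥ 2`), one has `R(p, q, r) = 1`. -/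
theorem stmt_16 (p q k : ℕ) (hp : 2 ≤ p) (hq : 2 ≤ q) (hpq : Nat.Coprime p q)
    (hk : 1 ≤ k) (r : ℕ) (hr : r = p * q * k - 1) :
    2 / ((p * q * r : ℕ) : ℝ) +
      fsTerm ((p * q * r : ℕ) : ℝ) p +
      fsTerm ((p * q * r : ℕ) : ℝ) q +
      fsTerm ((p * q * r : ℕ) : ℝ) r = 1 := by
  obtain ⟨hr1, hkr⟩ : r + 1 = p * q * k ∧ k < r := by
    have := Nat.mul_le_mul_right k (Nat.mul_le_mul hp hq); omega
  have hpr : p ∣ r + 1 := hr1 ▸ (dvd_mul_right p q).mul_right k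
  have hqr : q ∣ r + 1 := hr1 ▸ (dvd_mul_left q p).mul_right k
  obtain ⟨a, hap, hpa⟩ := Nat.exists_lt_dvd_mul_add_one (by omega) hpq
  obtain ⟨b, hbq, hqb⟩ := Nat.exists_lt_dvd_mul_add_one (by omega) hpq.symm
  have hfp : fsTerm ((p * q * r : ℕ) : ℝ) p = 1 - 2 * a / p := by
    rw [show p * q * r = p * (q * r) by ring]
    refine fsTerm_natCast_mul hp ?_ hap
    exact mul_right_comm q a r ▸ Nat.mul_modEq_one_of_dvd_add_one hpa hpr
  have hfq : fsTerm ((p * q * r : ℕ) : ℝ) q = 1 - 2 * b / q := by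
    rw [show p * q * r = q * (p * r) by ring]
    refine fsTerm_natCast_mul hq ?_ hbq
    exact mul_right_comm p b r ▸ Nat.mul_modEq_one_of_dvd_add_one hqb hqr
  have hfr : fsTerm ((p * q * r : ℕ) : ℝ) r = 1 - 2 * k / r := by
    rw [show p * q * r = r * (p * q) by ring]
    exact fsTerm_natCast_mul (by omega) (hr1 ▸ Nat.add_modEq_left) hkr
  have hab : (q * a + p * b + 1 : ℝ) = p * q := by
    exact_mod_cast Nat.mul_add_mul_add_one_eq_mul hpq hap hbq hpa hqb
  have hr1' : (r + 1 : ℝ) = p * q * k := by exact_mod_cast hr1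
  have : (p : ℝ) ≠ 0 := Nat.cast_ne_zero.mpr (by omega)
  have : (q : ℝ) ≠ 0 := Nat.cast_ne_zero.mpr (by omega)
  have : (r : ℝ) ≠ 0 := Nat.cast_ne_zero.mpr (by omega)
  rw [hfp, hfq, hfr]
  push_cast
  field_simp
  linear_combination (-2 * r) * hab + 2 * hr1'
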